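/- Assume ε ∈ {1,−1}, ξ ≠ 0, εξ > 0, w_m ≠ 1/3, z is twice differentiable at λ* with z′(λ*) ≠ 0, and z(λ*)² = 1/(6εξ). Let J be the 3×3 Jacobian matrix of the vector field F at the point P₃ᵦ = (0, 0, λ*). Then the characteristic polynomial of J equals (X − 6ξ(1−3w_m))·(X − 12ξ)·(X + 6ξ); in particular the eigenvalues of J are 6ξ(1−3w_m), 12ξ and −6ξ. -/
import Mathlib


open Polynomial Filter

/-- The factor `D(λ) = 1 − 6εξ(1−6ξ)z(λ)²` coming from the time reparametrization. -/
noncomputable def Dfun (ε ξ : ℝ) (z : ℝ → ℝ) (l : ℝ) : ℝ :=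
  1 - 6*ε*ξ*(1-6*ξ)*(z l)^2

/-- The common bracket
`B(x,y,λ) = −4/3 − 2ξλy²z(λ) + ε(1−6ξ)(1−w_m)x² + 2εξ(1−3w_m)(x+z(λ))² + (1+w_m)(1−y²)`. -/
noncomputable def Bfun (ε ξ wm : ℝ) (z : ℝ → ℝ) (x y l : ℝ) : ℝ :=
  -4/3 - 2*ξ*l*y^2*(z l) + ε*(1-6*ξ)*(1-wm)*x^2
    + 2*ε*ξ*(1-3*wm)*(x + z l)^2 + (1+wm)*(1-y^2)

/-- First component of the vector field:
`f₁ = −(x − (ε/2)λy²)·D(λ) + (3/2)(x + 6ξz(λ))·B(x,y,λ)`. -/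
noncomputable def f1 (ε ξ wm : ℝ) (z : ℝ → ℝ) (x y l : ℝ) : ℝ :=
  -(x - ε/2*l*y^2) * Dfun ε ξ z l + 3/2*(x + 6*ξ*(z l)) * Bfun ε ξ wm z x y l

/-- Second component: `f₂ = y(2 − (1/2)λx)·D(λ) + (3/2)y·B(x,y,λ)`. -/
noncomputable def f2 (ε ξ wm : ℝ) (z : ℝ → ℝ) (x y l : ℝ) : ℝ :=
  y*(2 - 1/2*l*x) * Dfun ε ξ z l + 3/2*y * Bfun ε ξ wm z x y l

/-- Third component: `f₃ = x·D(λ)/z′(λ)`. -/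
noncomputable def f3 (ε ξ : ℝ) (z : ℝ → ℝ) (x y l : ℝ) : ℝ :=
  x * Dfun ε ξ z l / deriv z l

/-- The full vector field `F(x,y,λ) = (f₁,f₂,f₃)` of the reduced cosmological system. -/
noncomputable def Fvec (ε ξ wm : ℝ) (z : ℝ → ℝ) (x y l : ℝ) : ℝ × ℝ × ℝ :=
  (f1 ε ξ wm z x y l, f2 ε ξ wm z x y l, f3 ε ξ z x y l)

/-- The effective equation-of-state parameter `w_eff(x,y,λ)`. -/
noncomputable def weff (ε ξ wm : ℝ) (z : ℝ → ℝ) (x y l : ℝ) : ℝ :=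
  (Dfun ε ξ z l)⁻¹ *
    (-1 + ε*(1-6*ξ)*(1-wm)*x^2 + 2*ε*ξ*(1-3*wm)*(x + z l)^2
      + (1+wm)*(1-y^2) - 2*ε*ξ*(1-6*ξ)*(z l)^2 - 2*ξ*l*y^2*(z l))

/-- The Jacobian matrix `J_{ij} = ∂f_i/∂(j-th variable)` of `F` at the point `(x,y,λ)`. -/
noncomputable def Jmat (ε ξ wm : ℝ) (z : ℝ → ℝ) (x y l : ℝ) :
    Matrix (Fin 3) (Fin 3) ℝ :=
  Matrix.of
    ![![deriv (fun t => f1 ε ξ wm z t y l) x,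
        deriv (fun t => f1 ε ξ wm z x t l) y,
        deriv (fun t => f1 ε ξ wm z x y t) l],
      ![deriv (fun t => f2 ε ξ wm z t y l) x,
        deriv (fun t => f2 ε ξ wm z x t l) y,
        deriv (fun t => f2 ε ξ wm z x y t) l],
      ![deriv (fun t => f3 ε ξ z t y l) x,
        deriv (fun t => f3 ε ξ z x t l) y,
        deriv (fun t => f3 ε ξ z x y t) l]]


private lemma deriv_cubic' (a b c d x : ℝ) :
    deriv (fun t : ℝ => a*t^3 + b*t^2 + c*t + d) x = 3*a*x^2 + 2*b*x + c := by
  have h : HasDerivAt (fun t : ℝ => a*t^3 + b*t^2 + c*t + d)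
      (((a*(↑3*x^(3-1)) + b*(↑2*x^(2-1))) + c*1)) x :=
    ((((hasDerivAt_pow 3 x).const_mul a).add
      ((hasDerivAt_pow 2 x).const_mul b)).add ((hasDerivAt_id x).const_mul c)).add_const d
  rw [h.deriv]; push_cast; ring

private lemma charpoly_aux' (ξ wm b g : ℝ) (hbg : b*g = 36*ξ^2*(1-3*wm)) :
    (Matrix.of ![![-18*ξ*wm, 0, b], ![0, 12*ξ, 0],
        ![g, 0, 0]] : Matrix (Fin 3) (Fin 3) ℝ).charpoly
      = (X - C (6*ξ*(1-3*wm))) * (X - C (12*ξ)) * (X + C (6*ξ)) := by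
  have h : (C b : ℝ[X]) * C g = 36 * C ξ^2 * (1 - 3 * C wm) := by
    rw [← C_mul, hbg]; simp [C_mul, C_sub, C_pow, map_ofNat]
  rw [Matrix.charpoly, Matrix.det_fin_three]
  simp [Matrix.charmatrix_apply, Matrix.diagonal, Matrix.vecHead, Matrix.vecTail,
    C_mul, C_sub, map_ofNat]
  linear_combination (-(X - 12 * C ξ))*h

/-- At the radiation point `P₃ᵦ = (0, 0, λ*)` with
`z(λ*)² = 1/(6εξ)` and `w_m ≠ 1/3`, the Jacobian has characteristic polynomial
`(X − 6ξ(1−3w_m))(X − 12ξ)(X + 6ξ)`, i.e. eigenvalues `6ξ(1−3w_m), 12ξ, −6ξ`. -/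
theorem radiation3b_point_charpoly (ε ξ wm : ℝ) (z : ℝ → ℝ) (lstar : ℝ)
    (hε : ε = 1 ∨ ε = -1) (hξ0 : ξ ≠ 0) (hsign : 0 < ε*ξ) (hwm : wm ≠ 1/3)
    (hz1 : ∀ᶠ t in nhds lstar, DifferentiableAt ℝ z t)
    (hz2 : DifferentiableAt ℝ (deriv z) lstar) (hz' : deriv z lstar ≠ 0)
    (hl : (z lstar)^2 = 1/(6*ε*ξ)) :
    (Jmat ε ξ wm z 0 0 lstar).charpoly
      = (X - C (6*ξ*(1-3*wm))) * (X - C (12*ξ)) * (X + C (6*ξ)) ∧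
    (Jmat ε ξ wm z 0 0 lstar).charpoly.roots = {6*ξ*(1-3*wm), 12*ξ, -(6*ξ)} := by
  have hεξ : ε*ξ ≠ 0 := ne_of_gt hsign
  have h6εξ : (6:ℝ)*ε*ξ ≠ 0 := by rw [mul_assoc]; exact mul_ne_zero (by norm_num) hεξ
  have h6 : 6*ε*ξ*(z lstar)^2 = 1 := by rw [hl, mul_one_div]; exact div_self h6εξ
  have hD : Dfun ε ξ z lstar = 6*ξ := by
    simp only [Dfun]; linear_combination (-(1-6*ξ))*h6
  have h11 : deriv (fun t => f1 ε ξ wm z t 0 lstar) 0 = -18*ξ*wm := by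
    have hfun : (fun t => f1 ε ξ wm z t 0 lstar)
        = fun t => (3/2*(ε*(1-6*ξ)*(1-wm) + 2*ε*ξ*(1-3*wm)))*t^3
          + (3/2*(4*ε*ξ*(1-3*wm)*(z lstar)
              + 6*ξ*(z lstar)*(ε*(1-6*ξ)*(1-wm) + 2*ε*ξ*(1-3*wm))))*t^2
          + (-(Dfun ε ξ z lstar) + 3/2*(wm - 1/3 + 2*ε*ξ*(1-3*wm)*(z lstar)^2)
              + 36*ε*ξ^2*(1-3*wm)*(z lstar)^2)*t
          + 9*ξ*(z lstar)*(wm - 1/3 + 2*ε*ξ*(1-3*wm)*(z lstar)^2) := by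
      funext t; simp only [f1, Bfun]; ring
    rw [hfun, deriv_cubic']
    linear_combination (-1)*hD + ((1-3*wm)*(1/2+6*ξ))*h6
  have h12 : deriv (fun t => f1 ε ξ wm z 0 t lstar) 0 = 0 := by
    have hfun : (fun t => f1 ε ξ wm z 0 t lstar)
        = fun t => (0:ℝ)*t^3
          + (ε/2*lstar*(Dfun ε ξ z lstar) - 9*ξ*(z lstar)*(2*ξ*lstar*(z lstar) + (1+wm)))*t^2
          + 0*t + 9*ξ*(z lstar)*(wm - 1/3 + 2*ε*ξ*(1-3*wm)*(z lstar)^2) := by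
      funext t; simp only [f1, Bfun]; ring
    rw [hfun, deriv_cubic']; ring
  have h13 : deriv (fun t => f1 ε ξ wm z 0 0 t) lstar
      = 6*ξ*(1-3*wm)*deriv z lstar := by
    have hfun : (fun t => f1 ε ξ wm z 0 0 t)
        = fun t => 9*ξ*(z t)*(wm - 1/3 + 2*ε*ξ*(1-3*wm)*(z t)^2) := by
      funext t; simp only [f1, Bfun]; ring
    have hdz : HasDerivAt z (deriv z lstar) lstar :=
      (hz1.self_of_nhds).hasDerivAt
    have H : HasDerivAt (fun t => 9*ξ*(z t)*(wm - 1/3 + 2*ε*ξ*(1-3*wm)*(z t)^2))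
        ((9*ξ*deriv z lstar)*(wm - 1/3 + 2*ε*ξ*(1-3*wm)*(z lstar)^2)
          + (9*ξ*(z lstar))*(2*ε*ξ*(1-3*wm)*(↑2*(z lstar)^(2-1)*deriv z lstar))) lstar :=
      (hdz.const_mul (9*ξ)).mul
        (((hdz.pow 2).const_mul (2*ε*ξ*(1-3*wm))).const_add (wm - 1/3))
    rw [hfun, H.deriv]
    push_cast
    linear_combination (9*ξ*(1-3*wm)*deriv z lstar)*h6
  have h21 : deriv (fun t => f2 ε ξ wm z t 0 lstar) 0 = 0 := by
    have hfun : (fun t => f2 ε ξ wm z t 0 lstar) = fun _ => (0:ℝ) := by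
      funext t; simp [f2]
    rw [hfun, deriv_const]
  have h22 : deriv (fun t => f2 ε ξ wm z 0 t lstar) 0 = 12*ξ := by
    have hfun : (fun t => f2 ε ξ wm z 0 t lstar)
        = fun t => (3/2*(-2*ξ*lstar*(z lstar) - (1+wm)))*t^3 + (0:ℝ)*t^2
          + (2*(Dfun ε ξ z lstar) + 3/2*(wm - 1/3 + 2*ε*ξ*(1-3*wm)*(z lstar)^2))*t + 0 := by
      funext t; simp only [f2, Bfun]; ring
    rw [hfun, deriv_cubic']
    linear_combination 2*hD + ((1-3*wm)/2)*h6
  have h23 : deriv (fun t => f2 ε ξ wm z 0 0 t) lstar = 0 := by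
    have hfun : (fun t => f2 ε ξ wm z 0 0 t) = fun _ => (0:ℝ) := by
      funext t; simp [f2]
    rw [hfun, deriv_const]
  have h31 : deriv (fun t => f3 ε ξ z t 0 lstar) 0 = 6*ξ/deriv z lstar := by
    have hfun : (fun t => f3 ε ξ z t 0 lstar)
        = fun t => (0:ℝ)*t^3 + (0:ℝ)*t^2 + (Dfun ε ξ z lstar/deriv z lstar)*t + 0 := by
      funext t; simp only [f3]; ring
    rw [hfun, deriv_cubic', hD]; ring
  have h32 : deriv (fun t => f3 ε ξ z 0 t lstar) 0 = 0 := by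
    have hfun : (fun t => f3 ε ξ z 0 t lstar) = fun _ => (0:ℝ) := by
      funext t; simp [f3]
    rw [hfun, deriv_const]
  have h33 : deriv (fun t => f3 ε ξ z 0 0 t) lstar = 0 := by
    have hfun : (fun t => f3 ε ξ z 0 0 t) = fun _ => (0:ℝ) := by
      funext t; simp [f3]
    rw [hfun, deriv_const]
  have hM : Jmat ε ξ wm z 0 0 lstar
      = Matrix.of ![![-18*ξ*wm, 0, 6*ξ*(1-3*wm)*deriv z lstar],
          ![0, 12*ξ, 0], ![6*ξ/deriv z lstar, 0, 0]] := by
    rw [Jmat, h11, h12, h13, h21, h22, h23, h31, h32, h33]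
  have hbg : (6*ξ*(1-3*wm)*deriv z lstar)*(6*ξ/deriv z lstar) = 36*ξ^2*(1-3*wm) := by
    field_simp; ring
  have hcp := charpoly_aux' ξ wm (6*ξ*(1-3*wm)*deriv z lstar) (6*ξ/deriv z lstar) hbg
  constructor
  · rw [hM]; exact hcp
  · rw [hM, hcp]
    have h3 : (X + C (6*ξ) : ℝ[X]) = X - C (-(6*ξ)) := by rw [map_neg, sub_neg_eq_add]
    rw [h3, roots_mul (mul_ne_zero (mul_ne_zero (X_sub_C_ne_zero (6*ξ*(1-3*wm)))
        (X_sub_C_ne_zero (12*ξ))) (X_sub_C_ne_zero (-(6*ξ)))),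
      roots_mul (mul_ne_zero (X_sub_C_ne_zero (6*ξ*(1-3*wm))) (X_sub_C_ne_zero (12*ξ))),
      roots_X_sub_C, roots_X_sub_C, roots_X_sub_C]
    rfl
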